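/- arXiv:1904.07784 — 2 statements merged into one kernel-verified Lean document; each statement's English description precedes it below -/
import Mathlib

section
/- Let b : ℝ → ℝ be bounded, measurable and Lebesgue integrable, and define φ(x) = ∫_0^x exp(−2 ∫_0^y b(z) dz) dy. Then φ is a bijection of ℝ onto ℝ, and its inverse φ⁻¹ is Lipschitz continuous with Lipschitz constant exp(2‖b‖_{L¹}), where ‖b‖_{L¹} = ∫_ℝ |b(z)| dz. -/
/-!
Since `|∫_0^x b| ≤ ‖b‖_{L¹}`, the derivative `φ' = exp(−2 ∫_0^· b)` is bounded below by
`c = exp(−2‖b‖_{L¹}) > 0`. Hence `φ(y) − φ(x) ≥ c (y − x)` for `x ≤ y`: the continuous function `φ`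
is strictly increasing and tends to `±∞`, so it is a bijection, and its inverse is
`c⁻¹`-Lipschitz.
-/

open MeasureTheory intervalIntegral

noncomputable section

/-- `φ'(x) = exp(−2 ∫_0^x b(z) dz)`. -/
def phi' (b : ℝ → ℝ) (x : ℝ) : ℝ := Real.exp (-2 * ∫ z in (0:ℝ)..x, b z)

/-- `φ(x) = ∫_0^x exp(−2 ∫_0^y b(z) dz) dy`. -/
def phi (b : ℝ → ℝ) (x : ℝ) : ℝ := ∫ y in (0:ℝ)..x, phi' b y

open Filter

section ExpandingMaps

variable {f : ℝ → ℝ} {c : ℝ}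

lemma mul_abs_sub_le_abs_sub_of_mul_sub_le (h : ∀ x y, x ≤ y → c * (y - x) ≤ f y - f x)
    (x y : ℝ) : c * |x - y| ≤ |f x - f y| := by
  rcases le_total x y with hxy | hxy
  · rw [abs_sub_comm x, abs_sub_comm (f x), abs_of_nonneg (sub_nonneg.mpr hxy)]
    exact (h x y hxy).trans (le_abs_self _)
  · rw [abs_of_nonneg (sub_nonneg.mpr hxy)]
    exact (h y x hxy).trans (le_abs_self _)

lemma Continuous.bijective_of_mul_sub_le (hf : Continuous f) (hc : 0 < c)
    (h : ∀ x y, x ≤ y → c * (y - x) ≤ f y - f x) : Function.Bijective f := by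
  have hmono : StrictMono f := fun x y hxy => by
    nlinarith [h x y hxy.le]
  refine ⟨hmono.injective, hf.surjective ?_ ?_⟩
  · refine tendsto_atTop_mono' _ ?_
      (tendsto_atTop_add_const_left _ (f 0) (tendsto_id.const_mul_atTop hc))
    filter_upwards [eventually_ge_atTop 0] with x hx
    show f 0 + c * x ≤ f x
    linarith [h 0 x hx]
  · refine tendsto_atBot_mono' _ ?_
      (tendsto_atBot_add_const_left _ (f 0) (tendsto_id.const_mul_atBot hc))
    filter_upwards [eventually_le_atBot 0] with x hx
    show f x ≤ f 0 + c * x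
    linarith [h x 0 hx]

lemma abs_invFun_sub_le_of_mul_sub_le (hsurj : Function.Surjective f) (hc : 0 < c)
    (h : ∀ x y, x ≤ y → c * (y - x) ≤ f y - f x) (u v : ℝ) :
    |Function.invFun f u - Function.invFun f v| ≤ c⁻¹ * |u - v| := by
  rw [le_inv_mul_iff₀ hc]
  have hright := Function.rightInverse_invFun hsurj
  simpa only [hright u, hright v] using
    mul_abs_sub_le_abs_sub_of_mul_sub_le h (Function.invFun f u) (Function.invFun f v)

end ExpandingMaps

lemma norm_intervalIntegral_le_integral_norm {E : Type*} [NormedAddCommGroup E]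
    [NormedSpace ℝ E] {μ : Measure ℝ} {f : ℝ → E} (hf : Integrable f μ) (a b : ℝ) :
    ‖∫ x in a..b, f x ∂μ‖ ≤ ∫ x, ‖f x‖ ∂μ :=
  norm_integral_le_integral_norm_uIoc.trans
    (setIntegral_le_integral hf.norm (ae_of_all _ fun _ => norm_nonneg _))

section Phi

variable {b : ℝ → ℝ}

lemma exp_neg_two_mul_integral_abs_le_phi' (hb : Integrable b) (x : ℝ) :
    Real.exp (-(2 * ∫ z, |b z|)) ≤ phi' b x := by
  have hbound : |∫ z in (0:ℝ)..x, b z| ≤ ∫ z, |b z| := by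
    simpa only [Real.norm_eq_abs] using norm_intervalIntegral_le_integral_norm hb 0 x
  exact Real.exp_le_exp.mpr (by linarith [(abs_le.mp hbound).2])

lemma continuous_phi' (hb : Integrable b) : Continuous (phi' b) :=
  Real.continuous_exp.comp
    (continuous_const.mul (continuous_primitive (fun _ _ => hb.intervalIntegrable) 0))

lemma continuous_phi (hb : Integrable b) : Continuous (phi b) :=
  continuous_primitive (fun _ _ => (continuous_phi' hb).intervalIntegrable _ _) 0

lemma phi_sub_phi (hb : Integrable b) (x y : ℝ) :
    phi b y - phi b x = ∫ z in x..y, phi' b z :=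
  integral_interval_sub_left ((continuous_phi' hb).intervalIntegrable _ _)
    ((continuous_phi' hb).intervalIntegrable _ _)

lemma exp_neg_two_mul_integral_abs_mul_sub_le_phi_sub_phi (hb : Integrable b) {x y : ℝ}
    (hxy : x ≤ y) : Real.exp (-(2 * ∫ z, |b z|)) * (y - x) ≤ phi b y - phi b x := by
  rw [phi_sub_phi hb, mul_comm, ← smul_eq_mul, ← intervalIntegral.integral_const]
  exact integral_mono_on hxy intervalIntegrable_const
    ((continuous_phi' hb).intervalIntegrable _ _)
    fun z _ => exp_neg_two_mul_integral_abs_le_phi' hb z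

end Phi

theorem statement2_general (b : ℝ → ℝ)
    (hint : Integrable b (volume : Measure ℝ)) :
    Function.Bijective (phi b) ∧
    ∀ u v : ℝ,
      |Function.invFun (phi b) u - Function.invFun (phi b) v|
        ≤ Real.exp (2 * ∫ z, |b z|) * |u - v| := by
  have hc : 0 < Real.exp (-(2 * ∫ z, |b z|)) := Real.exp_pos _
  have hgrowth := fun x y (hxy : x ≤ y) =>
    exp_neg_two_mul_integral_abs_mul_sub_le_phi_sub_phi hint hxy
  have hbij := (continuous_phi hint).bijective_of_mul_sub_le hc hgrowth
  refine ⟨hbij, fun u v => ?_⟩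
  simpa only [Real.exp_neg, inv_inv] using
    abs_invFun_sub_le_of_mul_sub_le hbij.surjective hc hgrowth u v

/-- If `b : ℝ → ℝ` is bounded, measurable and Lebesgue integrable, then
`φ` is a bijection of `ℝ` onto `ℝ`, and its inverse `φ⁻¹` is Lipschitz continuous with
Lipschitz constant `exp(2‖b‖_{L¹})`. -/
theorem statement2 (b : ℝ → ℝ) (hmeas : Measurable b)
    (hint : Integrable b (volume : Measure ℝ))
    (hbd : ∃ C : ℝ, ∀ x, |b x| ≤ C) :
    Function.Bijective (phi b) ∧
    ∀ u v : ℝ,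
      |Function.invFun (phi b) u - Function.invFun (phi b) v|
        ≤ Real.exp (2 * ∫ z, |b z|) * |u - v| :=
  statement2_general b hint

end
end

section
/- Let p ∈ (0,1), T > 0 and n ∈ ℕ with n ≥ 1, and consider the quadratic grid t_k = T (k/n)², k = 0, …, n. Then Σ_{k=1}^{n−1} t_k^{−p} (t_{k+1} − t_k) ≤ (3/2) T^{1−p}/(1−p). -/
open Real Finset

-- pointwise, b ≥ 0 case
lemma ptwise_up {b x : ℝ} (hb : 0 ≤ b) (hx : 1 ≤ x) :
    (b+1) * x ^ b + x ^ (b+1) ≤ (x+1) ^ (b+1) := by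
  have hx0 : (0:ℝ) < x := lt_of_lt_of_le one_pos hx
  have h1 : (1:ℝ) + (b+1) * (1/x) ≤ (1 + 1/x) ^ (b+1) :=
    one_add_mul_self_le_rpow_one_add (by
      have : (0:ℝ) ≤ 1/x := by positivity
      linarith) (by linarith)
  have h2 : x ^ (b+1) * (1 + (b+1) * (1/x)) ≤ x ^ (b+1) * (1 + 1/x) ^ (b+1) := by
    apply mul_le_mul_of_nonneg_left _ (by positivity)
    linarith [h1]
  have h3 : x ^ (b+1) * (1 + 1/x) ^ (b+1) = (x+1) ^ (b+1) := by
    rw [← Real.mul_rpow (by positivity) (by positivity)]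
    congr 1
    field_simp
  have h4 : x ^ (b+1) * (1 + (b+1) * (1/x)) = x ^ (b+1) + (b+1) * x ^ b := by
    have : x ^ (b+1) = x ^ b * x := by
      rw [Real.rpow_add_one hx0.ne']
    rw [this]; field_simp
  linarith [h2, h3.symm ▸ h2, h4 ▸ h2]

lemma ptwise_down {b x : ℝ} (hb : -1 < b) (hb' : b ≤ 0) (hx : 1 ≤ x) :
    (b+1) * x ^ b ≤ x ^ (b+1) - (x-1) ^ (b+1) := by
  have hx0 : (0:ℝ) < x := lt_of_lt_of_le one_pos hx
  have h1 : (1 + (-(1/x))) ^ (b+1) ≤ 1 + (b+1) * (-(1/x)) :=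
    rpow_one_add_le_one_add_mul_self (by
      have : 1/x ≤ 1 := by rw [div_le_one hx0]; exact hx
      linarith) (by linarith) (by linarith)
  have h2 : x ^ (b+1) * (1 + (-(1/x))) ^ (b+1) ≤ x ^ (b+1) * (1 + (b+1) * (-(1/x))) :=
    mul_le_mul_of_nonneg_left h1 (by positivity)
  have h3 : x ^ (b+1) * (1 + (-(1/x))) ^ (b+1) = (x-1) ^ (b+1) := by
    rw [← Real.mul_rpow (by positivity) (by
      have : 1/x ≤ 1 := by rw [div_le_one hx0]; exact hx
      linarith)]
    congr 1
    field_simp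
    ring
  have h4 : x ^ (b+1) * (1 + (b+1) * (-(1/x))) = x ^ (b+1) - (b+1) * x ^ b := by
    have : x ^ (b+1) = x ^ b * x := by rw [Real.rpow_add_one hx0.ne']
    rw [this]; field_simp; ring
  linarith [h3 ▸ h2, h4 ▸ h2]

lemma aux_sum {b : ℝ} (hb : -1 < b) (hb1 : b ≤ 1) (n : ℕ) :
    ∑ k ∈ Finset.Ico 1 n, (b+1) * (k:ℝ) ^ b ≤ (n:ℝ) ^ (b+1) := by
  rcases le_or_gt 0 b with hpos | hneg
  · induction n with
    | zero => simp [Real.rpow_nonneg]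
    | succ n ih =>
      rcases Nat.eq_zero_or_pos n with rfl | hn
      · simp
      rw [Finset.sum_Ico_succ_top hn]
      have hn1 : (1:ℝ) ≤ (n:ℝ) := by exact_mod_cast hn
      have := ptwise_up hpos hn1
      push_cast
      linarith [ih]
  · -- telescoping
    have key : ∀ k ∈ Finset.Ico 1 n, (b+1) * (k:ℝ) ^ b ≤ (k:ℝ) ^ (b+1) - ((k:ℝ)-1) ^ (b+1) := by
      intro k hk
      have hk1 : 1 ≤ k := (Finset.mem_Ico.mp hk).1
      exact ptwise_down hb (le_of_lt hneg) (by exact_mod_cast hk1)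
    calc ∑ k ∈ Finset.Ico 1 n, (b+1) * (k:ℝ) ^ b
        ≤ ∑ k ∈ Finset.Ico 1 n, ((k:ℝ) ^ (b+1) - ((k:ℝ)-1) ^ (b+1)) := Finset.sum_le_sum key
      _ = ∑ j ∈ Finset.range (n-1), ((((j:ℝ)+1)) ^ (b+1) - (j:ℝ) ^ (b+1)) := by
          rw [Finset.sum_Ico_eq_sum_range]
          apply Finset.sum_congr rfl
          intro j _
          push_cast
          ring_nf
      _ = ((n-1:ℕ):ℝ) ^ (b+1) - ((0:ℕ):ℝ) ^ (b+1) := by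
          have := Finset.sum_range_sub (fun k : ℕ => ((k:ℕ):ℝ) ^ (b+1)) (n-1)
          simpa using this
      _ ≤ (n:ℝ) ^ (b+1) := by
          rcases Nat.eq_zero_or_pos n with rfl | hn
          · simp [Real.rpow_nonneg]
          have h0 : ((0:ℕ):ℝ) ^ (b+1) = 0 := by
            simp [Real.zero_rpow (by linarith : b + 1 ≠ 0)]
          rw [h0, sub_zero]
          apply Real.rpow_le_rpow (by positivity) (by exact_mod_cast Nat.sub_le n 1) (by linarith)


/-- Let `p ∈ (0,1)`, `T > 0`, `n ≥ 1`, and consider the quadratic grid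
`t_k = T (k/n)²`, `k = 0, …, n`. Then
`Σ_{k=1}^{n−1} t_k^{−p} (t_{k+1} − t_k) ≤ (3/2) T^{1−p}/(1−p)`. -/
theorem statement12 (p T : ℝ) (hp : p ∈ Set.Ioo (0:ℝ) 1) (hT : 0 < T)
    (n : ℕ) (hn : 1 ≤ n) :
    ∑ k ∈ Finset.Ico 1 n,
        (T * ((k : ℝ) / n) ^ 2) ^ (-p) *
          (T * (((k : ℝ) + 1) / n) ^ 2 - T * ((k : ℝ) / n) ^ 2)
      ≤ (3 / 2) * (T ^ (1 - p) / (1 - p)) := by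
  obtain ⟨hp0, hp1⟩ := hp
  have hn0 : (0:ℝ) < n := by exact_mod_cast hn
  set b : ℝ := 1 - 2*p with hbdef
  have hb : -1 < b := by simp only [hbdef]; linarith
  have hb1 : b ≤ 1 := by simp only [hbdef]; linarith
  have hb0 : (0:ℝ) < b + 1 := by simp only [hbdef]; linarith
  have e4 : T^(-p) * T = T^(1-p) := by
    rw [show (1-p : ℝ) = -p + 1 by ring, Real.rpow_add hT, Real.rpow_one]
  set C : ℝ := 3 * T^(1-p) * (n:ℝ)^(2*p) / (n:ℝ)^2 / (b+1) with hCdef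
  have hC : 0 ≤ C := by
    have : (0:ℝ) < T^(1-p) := Real.rpow_pos_of_pos hT _
    have : (0:ℝ) < (n:ℝ)^(2*p) := Real.rpow_pos_of_pos hn0 _
    positivity
  have step : ∀ k ∈ Finset.Ico 1 n,
      (T * ((k : ℝ) / n) ^ 2) ^ (-p) *
        (T * (((k : ℝ) + 1) / n) ^ 2 - T * ((k : ℝ) / n) ^ 2)
      ≤ C * ((b+1) * (k:ℝ)^b) := by
    intro k hk
    obtain ⟨hk1, hkn⟩ := Finset.mem_Ico.mp hk
    have hk0 : (0:ℝ) < k := by exact_mod_cast hk1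
    have hk1' : (1:ℝ) ≤ k := by exact_mod_cast hk1
    have e2 : T*(((k:ℝ)+1)/n)^2 - T*((k:ℝ)/n)^2 = T*(2*(k:ℝ)+1)/(n:ℝ)^2 := by
      field_simp; ring
    have e3 : (((k:ℝ)/n)^2 : ℝ) ^ (-p) = (k:ℝ)^(-(2*p)) * (n:ℝ)^(2*p) := by
      rw [div_pow, Real.div_rpow (by positivity) (by positivity),
        ← Real.rpow_natCast (k:ℝ) 2, ← Real.rpow_natCast (n:ℝ) 2,
        ← Real.rpow_mul hk0.le, ← Real.rpow_mul hn0.le]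
      push_cast
      rw [show (2:ℝ)*(-p) = -(2*p) by ring, Real.rpow_neg hn0.le, div_eq_mul_inv, inv_inv]
    have e5 : (k:ℝ)^(-(2*p)) * (k:ℝ) = (k:ℝ)^b := by
      rw [show b = -(2*p) + 1 by simp only [hbdef]; ring, Real.rpow_add hk0, Real.rpow_one]
    have lhs_eq : (T * ((k : ℝ) / n) ^ 2) ^ (-p) *
        (T * (((k : ℝ) + 1) / n) ^ 2 - T * ((k : ℝ) / n) ^ 2)
        = T^(-p) * T * (n:ℝ)^(2*p) / (n:ℝ)^2 * ((k:ℝ)^(-(2*p)) * (2*(k:ℝ)+1)) := by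
      rw [Real.mul_rpow hT.le (by positivity), e3, e2]
      ring
    have rhs_eq : C * ((b+1) * (k:ℝ)^b)
        = T^(-p) * T * (n:ℝ)^(2*p) / (n:ℝ)^2 * ((k:ℝ)^(-(2*p)) * (3*(k:ℝ))) := by
      rw [hCdef, e4, ← e5]
      field_simp
    rw [lhs_eq, rhs_eq]
    have hfac : (0:ℝ) ≤ T^(-p) * T * (n:ℝ)^(2*p) / (n:ℝ)^2 := by
      have := Real.rpow_nonneg hT.le (-p)
      have := Real.rpow_nonneg hn0.le (2*p)
      positivity
    apply mul_le_mul_of_nonneg_left _ hfac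
    apply mul_le_mul_of_nonneg_left (by linarith) (Real.rpow_nonneg hk0.le _)
  have h1 : (n:ℝ)^(2*p) * (n:ℝ)^(b+1) = (n:ℝ)^2 := by
    rw [← Real.rpow_add hn0, ← Real.rpow_natCast (n:ℝ) 2]
    congr 1
    simp only [hbdef]; push_cast; ring
  calc ∑ k ∈ Finset.Ico 1 n,
        (T * ((k : ℝ) / n) ^ 2) ^ (-p) *
          (T * (((k : ℝ) + 1) / n) ^ 2 - T * ((k : ℝ) / n) ^ 2)
      ≤ ∑ k ∈ Finset.Ico 1 n, C * ((b+1) * (k:ℝ)^b) := Finset.sum_le_sum step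
    _ = C * ∑ k ∈ Finset.Ico 1 n, (b+1) * (k:ℝ)^b := by rw [Finset.mul_sum]
    _ ≤ C * (n:ℝ)^(b+1) := mul_le_mul_of_nonneg_left (aux_sum hb hb1 n) hC
    _ = (3 / 2) * (T ^ (1 - p) / (1 - p)) := by
        rw [hCdef]
        have hbne : b + 1 ≠ 0 := ne_of_gt hb0
        have h2 : b + 1 = 2*(1-p) := by simp only [hbdef]; ring
        have hpne : (1:ℝ) - p ≠ 0 := by linarith
        field_simp
        rw [show p * 2 = 2 * p by ring]
        linear_combination (2 * (1-p)) * h1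
end
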